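/- Let f : A → B be a ring homomorphism with f(Reg(A)) ⊆ Reg(B), where Reg(R) denotes the set of non-zero-divisors of a ring R, and let 𝔟 be an ideal of B. If the amalgamation A⋈^f 𝔟 is a Prüfer ring, then A is a Prüfer ring. -/

import Mathlib

/-- The amalgamation `A ⋈^f 𝔟 = {(a, f a + β) | a ∈ A, β ∈ 𝔟}` as a subring of `A × B`. -/
def amalgamation {A B : Type*} [CommRing A] [CommRing B]
    (f : A →+* B) (𝔟 : Ideal B) : Subring (A × B) where
  carrier := {x | ∃ a β, β ∈ 𝔟 ∧ x = (a, f a + β)}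
  one_mem' := ⟨1, 0, 𝔟.zero_mem, by ext <;> simp⟩
  zero_mem' := ⟨0, 0, 𝔟.zero_mem, by ext <;> simp⟩
  add_mem' := by
    rintro x y ⟨a₁, β₁, hβ₁, rfl⟩ ⟨a₂, β₂, hβ₂, rfl⟩
    exact ⟨a₁ + a₂, β₁ + β₂, 𝔟.add_mem hβ₁ hβ₂, by
      ext <;> simp <;> ring⟩
  neg_mem' := by
    rintro x ⟨a, β, hβ, rfl⟩
    exact ⟨-a, -β, 𝔟.neg_mem hβ, by
      ext <;> simp <;> ring⟩
  mul_mem' := by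
    rintro x y ⟨a₁, β₁, hβ₁, rfl⟩ ⟨a₂, β₂, hβ₂, rfl⟩
    refine ⟨a₁ * a₂, f a₁ * β₂ + β₁ * f a₂ + β₁ * β₂,
      𝔟.add_mem (𝔟.add_mem (Ideal.mul_mem_left _ _ hβ₂) (Ideal.mul_mem_right _ _ hβ₁))
        (Ideal.mul_mem_right _ _ hβ₁), by
      ext <;> simp <;> ring⟩

/-- The canonical embedding `a ↦ (a, f a)` of `A` into the amalgamation. -/
def amalgIota {A B : Type*} [CommRing A] [CommRing B]
    (f : A →+* B) (𝔟 : Ideal B) : A →+* ↥(amalgamation f 𝔟) where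
  toFun a := ⟨(a, f a), ⟨a, 0, 𝔟.zero_mem, by simp⟩⟩
  map_one' := by ext <;> simp
  map_mul' x y := by ext <;> simp
  map_zero' := by ext <;> simp
  map_add' x y := by ext <;> simp

/-- The first projection of the amalgamation onto `A`. -/
def amalgPi {A B : Type*} [CommRing A] [CommRing B]
    (f : A →+* B) (𝔟 : Ideal B) : ↥(amalgamation f 𝔟) →+* A :=
  (RingHom.fst A B).comp (amalgamation f 𝔟).subtype

lemma amalgPi_iota {A B : Type*} [CommRing A] [CommRing B]
    (f : A →+* B) (𝔟 : Ideal B) (a : A) : amalgPi f 𝔟 (amalgIota f 𝔟 a) = a := rfl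

lemma amalgIota_reg {A B : Type*} [CommRing A] [CommRing B]
    (f : A →+* B) (𝔟 : Ideal B)
    (hreg : ∀ a ∈ nonZeroDivisors A, f a ∈ nonZeroDivisors B)
    {a : A} (ha : a ∈ nonZeroDivisors A) :
    amalgIota f 𝔟 a ∈ nonZeroDivisors ↥(amalgamation f 𝔟) := by
  rw [mem_nonZeroDivisors_iff_right]
  intro x hx
  have h1 : x.val.1 * a = 0 := congrArg (fun z => z.val.1) hx
  have h2 : x.val.2 * f a = 0 := congrArg (fun z => z.val.2) hx
  have e1 : x.val.1 = 0 := (mem_nonZeroDivisors_iff_right.mp ha) _ h1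
  have e2 : x.val.2 = 0 := (mem_nonZeroDivisors_iff_right.mp (hreg a ha)) _ h2
  ext
  · exact e1
  · exact e2

/-- A commutative ring `R` is a Prüfer ring if every finitely generated ideal containing
a non-zero-divisor is invertible: there is an `R`-submodule `F` of the total ring of
fractions of `R` with `I·F` equal to the unit submodule. -/
def IsPruferRing (R : Type*) [CommRing R] : Prop :=
  ∀ I : Ideal R, I.FG → (∃ r ∈ I, r ∈ nonZeroDivisors R) →
    ∃ F : Submodule R (FractionRing R),
      Submodule.map (Algebra.linearMap R (FractionRing R)) I * F = 1

/-- If `f : A → B` maps non-zero-divisors to non-zero-divisors and the amalgamation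
`A ⋈^f 𝔟` is a Prüfer ring, then `A` is a Prüfer ring. -/
theorem retract_prufer {A R : Type*} [CommRing A] [CommRing R]
    (ι : A →+* R) (π : R →+* A) (hπι : π.comp ι = RingHom.id A)
    (hregι : ∀ a ∈ nonZeroDivisors A, ι a ∈ nonZeroDivisors R)
    (hP : IsPruferRing R) : IsPruferRing A := by
  have hπιa : ∀ a, π (ι a) = a := fun a => congrArg (fun g => g a)
    (congrArg (fun h : A →+* A => h.toFun) hπι)
  intro I hFG hex
  obtain ⟨r, hrI, hrreg⟩ := hex
  set J : Ideal R := Ideal.map ι I with hJ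
  have hJr : ι r ∈ J := Ideal.mem_map_of_mem ι hrI
  obtain ⟨F, hF⟩ := hP J (hFG.map ι) ⟨ι r, hJr, hregι r hrreg⟩
  set algR : R →+* FractionRing R := algebraMap R (FractionRing R) with halgR
  set u : FractionRing R := algR (ι r) with hu
  have key : ∀ j ∈ J, ∀ g ∈ F, ∃ w, algR w = algR j * g := by
    intro j hj g hg
    have hmem : algR j * g ∈ Submodule.map (Algebra.linearMap R (FractionRing R)) J * F :=
      Submodule.mul_mem_mul (Submodule.mem_map.mpr ⟨j, hj, rfl⟩) hg
    rw [hF, Submodule.one_eq_range] at hmem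
    obtain ⟨w, hw⟩ := hmem
    exact ⟨w, hw⟩
  have h1 : (1 : FractionRing R) ∈
      Submodule.map (Algebra.linearMap R (FractionRing R)) J * F := by
    rw [hF]; exact Submodule.one_le.mp le_rfl
  have hrep : ∃ l : List (R × R),
      (∀ p ∈ l, p.1 ∈ J ∧ ∃ g ∈ F, algR p.2 = u * g) ∧
      u * 1 = algR ((l.map fun p => p.1 * p.2).sum) := by
    refine Submodule.mul_induction_on h1 ?_ ?_
    · rintro m hm g hg
      obtain ⟨j, hj, rfl⟩ := Submodule.mem_map.mp hm
      obtain ⟨t, ht⟩ := key (ι r) hJr g hg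
      refine ⟨[(j, t)], ?_, ?_⟩
      · rintro p hp
        simp only [List.mem_singleton] at hp
        subst hp
        exact ⟨hj, g, hg, ht⟩
      · simp only [List.map_cons, List.map_nil, List.sum_cons, List.sum_nil, add_zero,
          map_mul]
        rw [ht]
        show u * ((Algebra.linearMap R (FractionRing R)) j * g) = algR j * (u * g)
        show u * (algR j * g) = algR j * (u * g)
        ring
    · rintro x y ⟨l₁, hl₁, hx⟩ ⟨l₂, hl₂, hy⟩
      refine ⟨l₁ ++ l₂, ?_, ?_⟩
      · intro p hp
        rcases List.mem_append.mp hp with h | h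
        · exact hl₁ p h
        · exact hl₂ p h
      · rw [List.map_append, List.sum_append, map_add, mul_add, ← hx, ← hy]
  obtain ⟨l, hl, hsum⟩ := hrep
  rw [mul_one] at hsum
  have hinj : Function.Injective ⇑algR := IsFractionRing.injective R (FractionRing R)
  have hRsum : ι r = (l.map fun p => p.1 * p.2).sum := hinj hsum
  have key2 : ∀ j' ∈ J, ∀ p ∈ l, ∃ w, j' * p.2 = ι r * w := by
    intro j' hj' p hp
    obtain ⟨-, g, hg, ht⟩ := hl p hp
    obtain ⟨w, hw⟩ := key j' hj' g hg
    refine ⟨w, hinj ?_⟩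
    rw [map_mul, map_mul, ht, hw, hu]
    ring
  have hπJ : ∀ j ∈ J, π j ∈ I := by
    intro j hj
    have hmapJ : Ideal.map π J = I := by
      rw [hJ, Ideal.map_map, hπι, Ideal.map_id]
    exact hmapJ ▸ Ideal.mem_map_of_mem π hj
  have hAsum : r = (l.map fun p => π p.1 * π p.2).sum := by
    have h := congrArg π hRsum
    rw [hπιa, map_list_sum, List.map_map] at h
    exact h.trans (congrArg List.sum
      (List.map_congr_left fun p _ => map_mul π p.1 p.2))
  set algA : A →+* FractionRing A := algebraMap A (FractionRing A) with halgA
  obtain ⟨v, hv⟩ : IsUnit (algA r) := IsLocalization.map_units (FractionRing A) ⟨r, hrreg⟩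
  set F' : Submodule A (FractionRing A) :=
    Submodule.span A ((fun p => (↑v⁻¹ : FractionRing A) * algA (π p.2)) '' {p | p ∈ l}) with hF'
  refine ⟨F', le_antisymm ?_ ?_⟩
  · rw [Submodule.mul_le]
    rintro m hm n hn
    obtain ⟨a, haI, rfl⟩ := Submodule.mem_map.mp hm
    have haJ : ι a ∈ J := Ideal.mem_map_of_mem ι haI
    refine Submodule.span_induction ?_ ?_ ?_ ?_ hn
      (p := fun x _ => (Algebra.linearMap A (FractionRing A)) a * x ∈
        (1 : Submodule A (FractionRing A)))
    · rintro x ⟨p, hp, rfl⟩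
      obtain ⟨w, hw⟩ := key2 (ι a) haJ p hp
      have hAw : a * π p.2 = r * π w := by
        have h2 := congrArg π hw
        rw [map_mul, map_mul, hπιa, hπιa] at h2
        exact h2
      have heq : (Algebra.linearMap A (FractionRing A)) a *
          ((↑v⁻¹ : FractionRing A) * algA (π p.2)) = algA (π w) := by
        show algA a * ((↑v⁻¹ : FractionRing A) * algA (π p.2)) = algA (π w)
        calc algA a * ((↑v⁻¹ : FractionRing A) * algA (π p.2))
            = (↑v⁻¹ : FractionRing A) * algA (a * π p.2) := by rw [map_mul]; ring
          _ = (↑v⁻¹ : FractionRing A) * ((v : FractionRing A) * algA (π w)) := by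
              rw [hAw, map_mul, hv]
          _ = algA (π w) := by rw [← mul_assoc, Units.inv_mul, one_mul]
      rw [heq, Submodule.one_eq_range]
      exact ⟨π w, rfl⟩
    · show (Algebra.linearMap A (FractionRing A)) a * 0 ∈ (1 : Submodule A (FractionRing A))
      rw [mul_zero]; exact Submodule.zero_mem _
    · intro x y _ _ hx hy
      show (Algebra.linearMap A (FractionRing A)) a * (x + y) ∈ (1 : Submodule A (FractionRing A))
      rw [mul_add]; exact Submodule.add_mem _ hx hy
    · intro c x _ hx
      show (Algebra.linearMap A (FractionRing A)) a * (c • x) ∈ (1 : Submodule A (FractionRing A))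
      rw [mul_smul_comm]
      exact Submodule.smul_mem _ c hx
  · rw [Submodule.one_le]
    have hone : (1 : FractionRing A) =
        (l.map fun p => algA (π p.1) * ((↑v⁻¹ : FractionRing A) * algA (π p.2))).sum := by
      have hstep : (l.map fun p => algA (π p.1) * ((↑v⁻¹ : FractionRing A) * algA (π p.2))).sum
          = (↑v⁻¹ : FractionRing A) * ((l.map fun p => π p.1 * π p.2).map ⇑algA).sum := by
        rw [List.map_map, ← List.sum_map_mul_left]
        congr 1
        apply List.map_congr_left
        intro p _
        show algA (π p.1) * ((↑v⁻¹ : FractionRing A) * algA (π p.2))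
          = (↑v⁻¹ : FractionRing A) * algA (π p.1 * π p.2)
        rw [map_mul]; ring
      rw [hstep, ← map_list_sum, ← hAsum, ← hv, Units.inv_mul]
    rw [hone]
    refine list_sum_mem ?_
    intro x hx
    obtain ⟨p, hp, rfl⟩ := List.mem_map.mp hx
    refine Submodule.mul_mem_mul (Submodule.mem_map.mpr ⟨π p.1, hπJ p.1 (hl p hp).1, rfl⟩) ?_
    exact Submodule.subset_span ⟨p, hp, rfl⟩

theorem amalgamation_prufer {A B : Type*} [CommRing A] [CommRing B]
    (f : A →+* B) (𝔟 : Ideal B)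
    (hreg : ∀ a ∈ nonZeroDivisors A, f a ∈ nonZeroDivisors B)
    (hP : IsPruferRing ↥(amalgamation f 𝔟)) :
    IsPruferRing A :=
  retract_prufer (amalgIota f 𝔟) (amalgPi f 𝔟) (RingHom.ext fun _ => rfl)
    (fun _ ha => amalgIota_reg f 𝔟 hreg ha) hP
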